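/- arXiv:1905.11497 — 3 statements merged into one kernel-verified Lean document; each statement's English description precedes it below -/
import Mathlib

section
/- Double robustness of AIPW (propensity correct, outcome model possibly wrong): if e(X) is the true propensity score with c₁ ≤ e(X) ≤ c₂ for 0 < c₁ ≤ c₂ < 1, and m₁(X), m₀(X) are any bounded measurable functions, then under ignorability E[ AY/e(X) + (1 − A/e(X))·m₁(X) − (1−A)Y/(1−e(X)) − (1 − (1−A)/(1−e(X)))·m₀(X) ] = τ₀. -/
/-!
Where `c₁ ≤ e(X) ≤ c₂` and `A ∈ {0, 1}`, the AIPW integrand equals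
`(Y(1) - Y(0)) + (A - e(X)) e(X)⁻¹ (Y(1) - m₁(X)) + (A - e(X)) (1 - e(X))⁻¹ (Y(0) - m₀(X))`.
Because `e(X) = E[A | X]`, each correction term has the shape `(A - E[A | X]) φ(X) (W - ψ(X))`
with `φ, ψ` bounded and `W ⊥ A | X`. Conditional independence factorises
`E[W A | X] = E[W | X] E[A | X]`, so `E[W (A - E[A | X]) | X] = 0`; together with
`E[A - E[A | X] | X] = 0` this makes both corrections centred, whatever `m₀, m₁` are.
-/

open MeasureTheory ProbabilityTheory

namespace MeasureTheory

variable {Ω : Type*} {m mΩ : MeasurableSpace Ω} {μ : Measure Ω}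

lemma memLp_top_inv_of_ae_le {f : Ω → ℝ} {c : ℝ} (hf : AEMeasurable f μ) (hc : 0 < c)
    (hfc : ∀ᵐ ω ∂μ, c ≤ f ω) : MemLp (fun ω => (f ω)⁻¹) ⊤ μ :=
  memLp_top_of_bound hf.inv.aestronglyMeasurable c⁻¹ <| hfc.mono fun ω hω => by
    rw [norm_inv, Real.norm_of_nonneg (hc.trans_le hω).le]
    exact inv_anti₀ hc hω

lemma integral_mul_eq_zero_of_condExp_ae_eq_zero (hm : m ≤ mΩ) [SigmaFinite (μ.trim hm)]
    {φ F : Ω → ℝ} (hφ : StronglyMeasurable[m] φ) (hφF : Integrable (φ * F) μ)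
    (hF : Integrable F μ) (hF0 : μ[F|m] =ᵐ[μ] 0) : ∫ ω, (φ * F) ω ∂μ = 0 := by
  rw [← integral_condExp hm]
  calc ∫ ω, (μ[φ * F|m]) ω ∂μ = ∫ ω, (φ * μ[F|m]) ω ∂μ :=
        integral_congr_ae (condExp_mul_of_stronglyMeasurable_left hφ hφF hF)
    _ = 0 := by
        rw [integral_congr_ae (hF0.mono fun ω hω => by simp [hω] : φ * μ[F|m] =ᵐ[μ] 0)]
        simp

lemma condExp_sub_condExp_ae_eq_zero (hm : m ≤ mΩ) [SigmaFinite (μ.trim hm)] {f : Ω → ℝ}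
    (hf : Integrable f μ) : μ[f - μ[f|m]|m] =ᵐ[μ] 0 := by
  filter_upwards [condExp_sub hf integrable_condExp m] with ω hω
  rw [hω, condExp_of_stronglyMeasurable hm stronglyMeasurable_condExp integrable_condExp]
  simp

end MeasureTheory

namespace ProbabilityTheory

variable {Ω β β' : Type*} {m' mΩ : MeasurableSpace Ω} [StandardBorelSpace Ω] {hm' : m' ≤ mΩ}
  {μ : Measure Ω} [IsFiniteMeasure μ]

lemma ae_trim_ae_condExpKernel {p : Ω → Prop} (hm' : m' ≤ mΩ) (h : ∀ᵐ ω ∂μ, p ω) :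
    ∀ᵐ ω ∂μ.trim hm', ∀ᵐ ω' ∂condExpKernel μ m' ω, p ω' := by
  refine Measure.ae_ae_of_ae_comp ?_
  rwa [condExpKernel_comp_trim hm']

lemma CondIndepFun.congr_ae {mβ : MeasurableSpace β} {mβ' : MeasurableSpace β'}
    {f f' : Ω → β} {g g' : Ω → β'} (h : CondIndepFun m' hm' f g μ)
    (hf : f =ᵐ[μ] f') (hg : g =ᵐ[μ] g') : CondIndepFun m' hm' f' g' μ :=
  Kernel.IndepFun.congr' h (ae_trim_ae_condExpKernel hm' hf) (ae_trim_ae_condExpKernel hm' hg)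

lemma CondIndepFun.ae_indepFun_condExpKernel {mβ : MeasurableSpace β} {mβ' : MeasurableSpace β'}
    [MeasurableSpace.CountableOrCountablyGenerated Ω (β × β')] {f : Ω → β} {g : Ω → β'}
    (h : CondIndepFun m' hm' f g μ) (hf : AEMeasurable f μ) (hg : AEMeasurable g μ) :
    ∀ᵐ ω ∂μ, IndepFun f g (condExpKernel μ m' ω) := by
  have hprod := (condIndepFun_iff_map_prod_eq_prod_map_map hf.measurable_mk hg.measurable_mk).1
    (h.congr_ae hf.ae_eq_mk hg.ae_eq_mk)
  filter_upwards [ae_of_ae_trim hm' hprod,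
    ae_of_ae_trim hm' (ae_trim_ae_condExpKernel hm' hf.ae_eq_mk),
    ae_of_ae_trim hm' (ae_trim_ae_condExpKernel hm' hg.ae_eq_mk)] with ω hω hff hgg
  have hindep : IndepFun (hf.mk f) (hg.mk g) (condExpKernel μ m' ω) := by
    rw [indepFun_iff_map_prod_eq_prod_map_map hf.measurable_mk.aemeasurable
      hg.measurable_mk.aemeasurable]
    simpa [Kernel.map_apply _ (hf.measurable_mk.prodMk hg.measurable_mk),
      Kernel.map_apply _ hf.measurable_mk, Kernel.map_apply _ hg.measurable_mk,
      Kernel.prod_apply] using hω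
  exact hindep.congr (Filter.EventuallyEq.symm hff) (Filter.EventuallyEq.symm hgg)

lemma CondIndepFun.condExp_mul_ae_eq {W B : Ω → ℝ} (h : CondIndepFun m' hm' W B μ)
    (hW : Integrable W μ) (hB : Integrable B μ) (hWB : Integrable (W * B) μ) :
    μ[W * B|m'] =ᵐ[μ] μ[W|m'] * μ[B|m'] := by
  filter_upwards [condExp_ae_eq_integral_condExpKernel hm' hWB,
    condExp_ae_eq_integral_condExpKernel hm' hW, condExp_ae_eq_integral_condExpKernel hm' hB,
    h.ae_indepFun_condExpKernel hW.aemeasurable hB.aemeasurable,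
    hW.condExpKernel_ae, hB.condExpKernel_ae] with ω hWBω hWω hBω hindep hWκ hBκ
  rw [Pi.mul_apply, hWBω, hWω, hBω]
  exact hindep.integral_mul_eq_mul_integral hWκ.1 hBκ.1

lemma CondIndepFun.condExp_mul_sub_condExp_ae_eq_zero {W B : Ω → ℝ}
    (h : CondIndepFun m' hm' W B μ) (hW : Integrable W μ) (hB : MemLp B ⊤ μ) :
    μ[W * (B - μ[B|m'])|m'] =ᵐ[μ] 0 := by
  have hWB : Integrable (W * B) μ := hW.mul_of_top_left hB
  have hWb : Integrable (W * μ[B|m']) μ := hW.mul_of_top_left (hB.condExp le_top)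
  calc μ[W * (B - μ[B|m'])|m'] = μ[W * B - W * μ[B|m']|m'] := by rw [mul_sub]
    _ =ᵐ[μ] μ[W * B|m'] - μ[W * μ[B|m']|m'] := condExp_sub hWB hWb m'
    _ =ᵐ[μ] μ[W|m'] * μ[B|m'] - μ[W|m'] * μ[B|m'] :=
      (h.condExp_mul_ae_eq hW (hB.integrable le_top) hWB).sub
        (condExp_mul_of_stronglyMeasurable_right stronglyMeasurable_condExp hWb hW)
    _ = 0 := sub_self _

lemma CondIndepFun.integral_sub_mul_mul_sub_eq_zero {W B b φ ψ : Ω → ℝ}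
    (h : CondIndepFun m' hm' W B μ) (hW : Integrable W μ) (hB : MemLp B ⊤ μ)
    (hb : b =ᵐ[μ] μ[B|m']) (hφ : MemLp φ ⊤ μ) (hφm : StronglyMeasurable[m'] φ)
    (hψ : MemLp ψ ⊤ μ) (hψm : StronglyMeasurable[m'] ψ) :
    ∫ ω, (B ω - b ω) * φ ω * (W ω - ψ ω) ∂μ = 0 := by
  have hR : MemLp (B - μ[B|m']) ⊤ μ := hB.sub (hB.condExp le_top)
  have hWR : Integrable (W * (B - μ[B|m'])) μ := hW.mul_of_top_left hR
  have hdecomp : (fun ω => (B ω - b ω) * φ ω * (W ω - ψ ω))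
      =ᵐ[μ] φ * (W * (B - μ[B|m'])) - (φ * ψ) * (B - μ[B|m']) := by
    filter_upwards [hb] with ω hω
    simp only [Pi.sub_apply, Pi.mul_apply, hω]
    ring
  rw [integral_congr_ae hdecomp, integral_sub' (hWR.mul_of_top_right hφ)
      ((hR.integrable le_top).mul_of_top_right (hψ.mul hφ)),
    integral_mul_eq_zero_of_condExp_ae_eq_zero hm' hφm (hWR.mul_of_top_right hφ) hWR
      (h.condExp_mul_sub_condExp_ae_eq_zero hW hB),
    integral_mul_eq_zero_of_condExp_ae_eq_zero hm' (hφm.mul hψm)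
      ((hR.integrable le_top).mul_of_top_right (hψ.mul hφ)) (hR.integrable le_top)
      (condExp_sub_condExp_ae_eq_zero hm' (hB.integrable le_top)), sub_zero]

end ProbabilityTheory

lemma aipw_integrand_eq {a e y1 y0 m1 m0 : ℝ} (ha : a = 0 ∨ a = 1) (he₀ : e ≠ 0) (he₁ : e ≠ 1) :
    a * (a * y1 + (1 - a) * y0) / e + (1 - a / e) * m1
        - (1 - a) * (a * y1 + (1 - a) * y0) / (1 - e) - (1 - (1 - a) / (1 - e)) * m0
      = (y1 - y0) + (a - e) * e⁻¹ * (y1 - m1) + (a - e) * (1 - e)⁻¹ * (y0 - m0) := by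
  have he₁' : 1 - e ≠ 0 := sub_ne_zero.mpr he₁.symm
  rcases ha with rfl | rfl <;> field_simp <;> ring

/-- Double robustness of AIPW, propensity correct: with the true propensity score `e(X)`
bounded in `[c₁, c₂] ⊂ (0,1)` and arbitrary bounded measurable outcome models `m1, m0`,
under ignorability the AIPW functional equals `τ₀ = E[Y(1) − Y(0)]`. -/
theorem aipw_doubly_robust_propensity_correct
    {Ω 𝒳 : Type*} [mΩ : MeasurableSpace Ω] [StandardBorelSpace Ω] [MeasurableSpace 𝒳]
    (μ : Measure Ω) [IsProbabilityMeasure μ]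
    (X : Ω → 𝒳) (A : Ω → ℝ) (Y1 Y0 : Ω → ℝ)
    (hX : Measurable X) (hA : Measurable A)
    (hY1 : Integrable Y1 μ) (hY0 : Integrable Y0 μ)
    (hAbin : ∀ ω, A ω = 0 ∨ A ω = 1)
    (Y : Ω → ℝ) (hY : ∀ ω, Y ω = A ω * Y1 ω + (1 - A ω) * Y0 ω)
    -- the true propensity score
    (e : 𝒳 → ℝ) (he : Measurable e)
    (heX : (fun ω => e (X ω)) =ᵐ[μ] μ[A | MeasurableSpace.comap X inferInstance])
    (c₁ c₂ : ℝ) (hc₁ : 0 < c₁) (hc₂ : c₂ < 1)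
    (hoverlap : ∀ᵐ ω ∂μ, c₁ ≤ e (X ω) ∧ e (X ω) ≤ c₂)
    -- ignorability
    (hig1 : CondIndepFun (MeasurableSpace.comap X inferInstance) hX.comap_le Y1 A μ)
    (hig0 : CondIndepFun (MeasurableSpace.comap X inferInstance) hX.comap_le Y0 A μ)
    -- arbitrary bounded measurable (possibly misspecified) outcome models
    (m1 m0 : 𝒳 → ℝ) (hm1 : Measurable m1) (hm0 : Measurable m0)
    (C : ℝ) (hm1bdd : ∀ x, |m1 x| ≤ C) (hm0bdd : ∀ x, |m0 x| ≤ C) :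
    ∫ ω, (A ω * Y ω / e (X ω) + (1 - A ω / e (X ω)) * m1 (X ω)
        - (1 - A ω) * Y ω / (1 - e (X ω))
        - (1 - (1 - A ω) / (1 - e (X ω))) * m0 (X ω)) ∂μ
      = ∫ ω, (Y1 ω - Y0 ω) ∂μ := by
  have hXm : Measurable[MeasurableSpace.comap X inferInstance] X := comap_measurable X
  have hA_top : MemLp A ⊤ μ := memLp_top_of_bound hA.aestronglyMeasurable 1 <|
    ae_of_all _ fun ω => by rcases hAbin ω with h | h <;> simp [h]
  have hAe_top : MemLp (A - fun ω => e (X ω)) ⊤ μ := hA_top.sub ((hA_top.condExp le_top).ae_eq heX.symm)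
  have hφ1 : MemLp (fun ω => (e (X ω))⁻¹) ⊤ μ :=
    memLp_top_inv_of_ae_le (he.comp hX).aemeasurable hc₁ (hoverlap.mono fun _ h => h.1)
  have hφ0 : MemLp (fun ω => (1 - e (X ω))⁻¹) ⊤ μ :=
    memLp_top_inv_of_ae_le (measurable_const.sub (he.comp hX)).aemeasurable (sub_pos.mpr hc₂)
      (hoverlap.mono fun _ h => by linarith [h.2])
  have hψ1 : MemLp (fun ω => m1 (X ω)) ⊤ μ :=
    memLp_top_of_bound (hm1.comp hX).aestronglyMeasurable C (ae_of_all _ fun _ => hm1bdd _)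
  have hψ0 : MemLp (fun ω => m0 (X ω)) ⊤ μ :=
    memLp_top_of_bound (hm0.comp hX).aestronglyMeasurable C (ae_of_all _ fun _ => hm0bdd _)
  have hT1 : Integrable (fun ω => (A ω - e (X ω)) * (e (X ω))⁻¹ * (Y1 ω - m1 (X ω))) μ :=
    (hY1.sub (hψ1.integrable le_top)).mul_of_top_right (hφ1.mul hAe_top)
  have hT0 : Integrable (fun ω => (A ω - e (X ω)) * (1 - e (X ω))⁻¹ * (Y0 ω - m0 (X ω))) μ :=
    (hY0.sub (hψ0.integrable le_top)).mul_of_top_right (hφ0.mul hAe_top)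
  have hdecomp := hoverlap.mono fun ω h => aipw_integrand_eq (y1 := Y1 ω) (y0 := Y0 ω)
    (m1 := m1 (X ω)) (m0 := m0 (X ω)) (hAbin ω) (hc₁.trans_le h.1).ne' (h.2.trans_lt hc₂).ne
  have hτ : Integrable (fun ω => Y1 ω - Y0 ω) μ := hY1.sub hY0
  simp_rw [hY]
  rw [integral_congr_ae hdecomp, integral_add ?_ hT0, integral_add hτ hT1,
    hig1.integral_sub_mul_mul_sub_eq_zero hY1 hA_top heX hφ1 (he.comp hXm).inv.stronglyMeasurable
      hψ1 (hm1.comp hXm).stronglyMeasurable,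
    hig0.integral_sub_mul_mul_sub_eq_zero hY0 hA_top heX hφ0
      (measurable_const.sub (he.comp hXm)).inv.stronglyMeasurable
      hψ0 (hm0.comp hXm).stronglyMeasurable, add_zero, add_zero]
  exact hτ.add hT1
end

section
/- The balancing property of the propensity score: A is conditionally independent of X given e(X), i.e., P(A = 1 | X, e(X)) = P(A = 1 | e(X)) = e(X) almost surely. -/
open MeasureTheory ProbabilityTheory

/-- Balancing property of the propensity score: if `e(X)` is a version of `E[A | X]`, then
`E[A | X, e(X)] = E[A | e(X)] = e(X)` almost surely (so `A ⊥ X | e(X)`). -/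
theorem propensity_score_balancing
    {Ω 𝒳 : Type*} [mΩ : MeasurableSpace Ω] [MeasurableSpace 𝒳]
    (μ : Measure Ω) [IsProbabilityMeasure μ]
    (X : Ω → 𝒳) (A : Ω → ℝ)
    (hX : Measurable X) (hA : Measurable A)
    (hAbin : ∀ ω, A ω = 0 ∨ A ω = 1)
    (e : 𝒳 → ℝ) (he : Measurable e)
    (heX : (fun ω => e (X ω)) =ᵐ[μ] μ[A | MeasurableSpace.comap X inferInstance]) :
    -- E[A | X, e(X)] = e(X) a.s.
    (μ[A | MeasurableSpace.comap X inferInstance ⊔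
        MeasurableSpace.comap (fun ω => e (X ω)) inferInstance]
      =ᵐ[μ] fun ω => e (X ω)) ∧
    -- E[A | e(X)] = e(X) a.s.
    (μ[A | MeasurableSpace.comap (fun ω => e (X ω)) inferInstance]
      =ᵐ[μ] fun ω => e (X ω)) := by
  set mX : MeasurableSpace Ω := MeasurableSpace.comap X inferInstance with hmX
  set mE : MeasurableSpace Ω := MeasurableSpace.comap (fun ω => e (X ω)) inferInstance with hmE
  have hEX : mE ≤ mX := by
    rw [hmE, show (fun ω => e (X ω)) = e ∘ X from rfl, ← MeasurableSpace.comap_comp]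
    exact MeasurableSpace.comap_mono he.comap_le
  have hXΩ : mX ≤ mΩ := hX.comap_le
  have hEΩ : mE ≤ mΩ := hEX.trans hXΩ
  have hsup : mX ⊔ mE = mX := sup_eq_left.mpr hEX
  have hmeasE : Measurable[mE] (fun ω => e (X ω)) :=
    Measurable.of_comap_le le_rfl
  have hintE : Integrable (fun ω => e (X ω)) μ :=
    (integrable_condExp).congr heX.symm
  have h2 : μ[A | mE] =ᵐ[μ] fun ω => e (X ω) := by
    have htower : μ[μ[A | mX] | mE] =ᵐ[μ] μ[A | mE] :=
      condExp_condExp_of_le hEX hXΩ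
    have hcongr : μ[μ[A | mX] | mE] =ᵐ[μ] μ[(fun ω => e (X ω)) | mE] :=
      condExp_congr_ae heX.symm
    have hfix : μ[(fun ω => e (X ω)) | mE] = fun ω => e (X ω) :=
      condExp_of_stronglyMeasurable hEΩ hmeasE.stronglyMeasurable hintE
    calc μ[A | mE] =ᵐ[μ] μ[μ[A | mX] | mE] := htower.symm
      _ =ᵐ[μ] μ[(fun ω => e (X ω)) | mE] := hcongr
      _ = fun ω => e (X ω) := hfix
  refine ⟨?_, h2⟩
  rw [hsup]
  exact heX.symm
end

section
/- If Y(a) ⊥ A | X for a = 0,1 (ignorability given X), then Y(a) ⊥ A | e(X), i.e., adjusting for the propensity score alone removes confounding: E[Y(a) | A = 1, e(X)] = E[Y(a) | e(X)] a.s. for a = 0,1. -/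
open MeasureTheory ProbabilityTheory

/-! Since `A` takes only the values `0` and `1`, every `P(A ∈ t | X)` is an affine function of
`P(A = 1 | X) = e(X)`, hence `σ(e(X))`-measurable. Conditioning the product formula
`P(Y ∈ s, A ∈ t | X) = P(Y ∈ s | X) P(A ∈ t | X)` on the coarser `σ(e(X))` then lets the second
factor be pulled out, which gives the same formula given `e(X)`. -/

namespace ProbabilityTheory

variable {Ω : Type*} {m G M : MeasurableSpace Ω} [mΩ : MeasurableSpace Ω] {μ : Measure Ω}

lemma condExp_comp_of_forall_eq_zero_or_eq_one [IsFiniteMeasure μ]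
    (hm : m ≤ mΩ) {A : Ω → ℝ} (hAbin : ∀ ω, A ω = 0 ∨ A ω = 1) (hA : Integrable A μ)
    (f : ℝ → ℝ) :
    μ[f ∘ A | m] =ᵐ[μ] fun ω => f 0 + (f 1 - f 0) * μ[A | m] ω := by
  have hfA : f ∘ A = (fun _ => f 0) + (f 1 - f 0) • A := by
    funext ω
    rcases hAbin ω with h | h <;> simp [h]
  rw [hfA]
  filter_upwards [condExp_add (integrable_const (f 0)) (hA.smul (f 1 - f 0)) m,
    condExp_smul (f 1 - f 0) A m] with ω hadd hsmul
  rw [hadd, Pi.add_apply, hsmul, condExp_const hm, Pi.smul_apply, smul_eq_mul]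

lemma aestronglyMeasurable_condExp_preimage_of_forall_eq_zero_or_eq_one [IsFiniteMeasure μ]
    (hM : M ≤ mΩ) {A : Ω → ℝ} (hAbin : ∀ ω, A ω = 0 ∨ A ω = 1) (hA : Measurable A)
    (hAG : AEStronglyMeasurable[G] (μ[A | M]) μ) (t : Set ℝ) :
    AEStronglyMeasurable[G] (μ⟦A ⁻¹' t | M⟧) μ := by
  have hAint : Integrable A μ := .of_bound hA.aestronglyMeasurable 1
    (ae_of_all _ fun ω => by rcases hAbin ω with h | h <;> simp [h])
  change AEStronglyMeasurable[G] (μ[t.indicator (fun _ => 1) ∘ A | M]) μ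
  exact ((hAG.const_mul _).const_add _).congr
    (condExp_comp_of_forall_eq_zero_or_eq_one hM hAbin hAint _).symm

variable [StandardBorelSpace Ω] [IsFiniteMeasure μ] {β β' : Type*}
  [MeasurableSpace β] [MeasurableSpace β']

lemma CondIndepFun.congr_left {hm : m ≤ mΩ} {Y Y' : Ω → β}
    {Z : Ω → β'} (h : CondIndepFun m hm Y Z μ) (hY : Y =ᵐ[μ] Y') :
    CondIndepFun m hm Y' Z μ := by
  refine Kernel.IndepFun.congr' h (Measure.ae_ae_of_ae_comp ?_) (ae_of_all _ fun _ => .rfl)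
  rwa [condExpKernel_comp_trim]

lemma CondIndepFun.of_le (hGM : G ≤ M) (hM : M ≤ mΩ)
    {Y : Ω → β} {Z : Ω → β'} (hY : Measurable Y) (hZ : Measurable Z)
    (h : CondIndepFun M hM Y Z μ)
    (hZG : ∀ t, MeasurableSet t → AEStronglyMeasurable[G] (μ⟦Z ⁻¹' t | M⟧) μ) :
    CondIndepFun G (hGM.trans hM) Y Z μ := by
  rw [condIndepFun_iff_condExp_inter_preimage_eq_mul hY hZ] at h ⊢
  intro s t hs ht
  have hprod := h s t hs ht
  have hZt : μ⟦Z ⁻¹' t | M⟧ =ᵐ[μ] μ⟦Z ⁻¹' t | G⟧ :=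
    (condExp_of_aestronglyMeasurable' (hGM.trans hM) (hZG t ht) integrable_condExp).symm.trans
      (condExp_condExp_of_le hGM hM)
  have hint : Integrable (μ⟦Y ⁻¹' s | M⟧ * μ⟦Z ⁻¹' t | M⟧) μ :=
    integrable_condExp.congr hprod
  calc μ⟦Y ⁻¹' s ∩ Z ⁻¹' t | G⟧
      =ᵐ[μ] μ[μ⟦Y ⁻¹' s ∩ Z ⁻¹' t | M⟧ | G] := (condExp_condExp_of_le hGM hM).symm
    _ =ᵐ[μ] μ[μ⟦Y ⁻¹' s | M⟧ * μ⟦Z ⁻¹' t | M⟧ | G] := condExp_congr_ae hprod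
    _ =ᵐ[μ] μ[μ⟦Y ⁻¹' s | M⟧ | G] * μ⟦Z ⁻¹' t | M⟧ :=
      condExp_mul_of_aestronglyMeasurable_right (hZG t ht) hint integrable_condExp
    _ =ᵐ[μ] μ⟦Y ⁻¹' s | G⟧ * μ⟦Z ⁻¹' t | G⟧ :=
      (condExp_condExp_of_le hGM hM).mul hZt

end ProbabilityTheory

theorem ignorability_given_propensity_score_general
    {Ω 𝒳 : Type*} [mΩ : MeasurableSpace Ω] [StandardBorelSpace Ω] [MeasurableSpace 𝒳]
    (μ : Measure Ω) [IsProbabilityMeasure μ]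
    (X : Ω → 𝒳) (A : Ω → ℝ) (Y1 Y0 : Ω → ℝ)
    (hX : Measurable X) (hA : Measurable A)
    (hY1 : Integrable Y1 μ) (hY0 : Integrable Y0 μ)
    (hAbin : ∀ ω, A ω = 0 ∨ A ω = 1)
    (e : 𝒳 → ℝ) (he : Measurable e)
    (heX : (fun ω => e (X ω)) =ᵐ[μ] μ[A | MeasurableSpace.comap X inferInstance])
    (hig1 : CondIndepFun (MeasurableSpace.comap X inferInstance) hX.comap_le Y1 A μ)
    (hig0 : CondIndepFun (MeasurableSpace.comap X inferInstance) hX.comap_le Y0 A μ) :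
    CondIndepFun (MeasurableSpace.comap (fun ω => e (X ω)) inferInstance)
        ((he.comp hX).comap_le) Y1 A μ ∧
    CondIndepFun (MeasurableSpace.comap (fun ω => e (X ω)) inferInstance)
        ((he.comp hX).comap_le) Y0 A μ := by
  have hGM : MeasurableSpace.comap (fun ω => e (X ω)) inferInstance
      ≤ MeasurableSpace.comap X inferInstance :=
    (he.comp (comap_measurable X)).comap_le
  have hAG : AEStronglyMeasurable[MeasurableSpace.comap (fun ω => e (X ω)) inferInstance]
      (μ[A | MeasurableSpace.comap X inferInstance]) μ :=
    (comap_measurable _).stronglyMeasurable.aestronglyMeasurable.congr heX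
  have key : ∀ Y : Ω → ℝ, AEMeasurable Y μ →
      CondIndepFun (MeasurableSpace.comap X inferInstance) hX.comap_le Y A μ →
      CondIndepFun (MeasurableSpace.comap (fun ω => e (X ω)) inferInstance)
        ((he.comp hX).comap_le) Y A μ := fun Y hY hig =>
    ((hig.congr_left hY.ae_eq_mk).of_le hGM hX.comap_le hY.measurable_mk hA
      fun t _ => aestronglyMeasurable_condExp_preimage_of_forall_eq_zero_or_eq_one
        hX.comap_le hAbin hA hAG t).congr_left hY.ae_eq_mk.symm
  exact ⟨key Y1 hY1.aemeasurable hig1, key Y0 hY0.aemeasurable hig0⟩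

/-- If `Y(a) ⊥ A | X` for `a = 0,1` (ignorability given `X`), then `Y(a) ⊥ A | e(X)`:
adjusting for the propensity score alone removes confounding. -/
theorem ignorability_given_propensity_score
    {Ω 𝒳 : Type*} [mΩ : MeasurableSpace Ω] [StandardBorelSpace Ω] [MeasurableSpace 𝒳]
    (μ : Measure Ω) [IsProbabilityMeasure μ]
    (X : Ω → 𝒳) (A : Ω → ℝ) (Y1 Y0 : Ω → ℝ)
    (hX : Measurable X) (hA : Measurable A)
    (hY1 : Integrable Y1 μ) (hY0 : Integrable Y0 μ)
    (hAbin : ∀ ω, A ω = 0 ∨ A ω = 1)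
    (e : 𝒳 → ℝ) (he : Measurable e)
    (heX : (fun ω => e (X ω)) =ᵐ[μ] μ[A | MeasurableSpace.comap X inferInstance])
    (hpos : ∀ᵐ ω ∂μ, 0 < e (X ω) ∧ e (X ω) < 1)
    (hig1 : CondIndepFun (MeasurableSpace.comap X inferInstance) hX.comap_le Y1 A μ)
    (hig0 : CondIndepFun (MeasurableSpace.comap X inferInstance) hX.comap_le Y0 A μ) :
    CondIndepFun (MeasurableSpace.comap (fun ω => e (X ω)) inferInstance)
        ((he.comp hX).comap_le) Y1 A μ ∧
    CondIndepFun (MeasurableSpace.comap (fun ω => e (X ω)) inferInstance)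
        ((he.comp hX).comap_le) Y0 A μ :=
  ignorability_given_propensity_score_general (mΩ := mΩ) μ X A Y1 Y0 hX hA hY1 hY0 hAbin e he heX
    hig1 hig0
end
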